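/- Let d ∈ {1,...,9} and let i be a positive integer whose decimal leading digit is d, with k = min{m ∈ ℕ : d·10^m > i}. Then the number of integers in {1,...,i} whose decimal leading digit equals d is (10^{k-1} − 1)/9 + i − d·10^{k-1} + 1. -/

import Mathlib

open Finset

/-- The leading (first) decimal digit of a positive integer. -/
def leadingDigit (n : ℕ) : ℕ := n / 10 ^ (Nat.log 10 n)

/-- The number of integers in {1,...,i} whose decimal leading digit equals d. -/
def ldCount (d i : ℕ) : ℕ := ((Finset.Icc 1 i).filter (fun j => leadingDigit j = d)).card

/-- Probability that the leading digit is d when i is uniform on {1,...,n} and j uniform on {1,...,i}. -/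
noncomputable def P (d n : ℕ) : ℝ := (1 / (n : ℝ)) * ∑ i ∈ Finset.Icc 1 n, (ldCount d i : ℝ) / i

/-
Group {1,…,i} by number of digits: the numbers with m + 1 digits and leading digit d form the
interval [d·10^m, (d+1)·10^m). For m < k - 1 it lies below i and contributes 10^m, so these blocks
together give the repunit (10^(k-1) - 1)/9; the last block is cut off by i to [d·10^(k-1), i].
-/

theorem leadingDigit_eq_and_log_eq_iff {d j m : ℕ} (hd0 : d ≠ 0) (hd : d < 10) :
    leadingDigit j = d ∧ Nat.log 10 j = m ↔ j ∈ Ico (d * 10 ^ m) ((d + 1) * 10 ^ m) := by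
  rw [mem_Ico]
  constructor
  · rintro ⟨hlead, rfl⟩
    have hpos : 0 < 10 ^ Nat.log 10 j := by positivity
    obtain ⟨hlo, hhi⟩ := (Nat.div_eq_iff hpos).1 hlead
    exact ⟨hlo, by rw [add_mul]; omega⟩
  · rintro ⟨hlo, hhi⟩
    have hlog : Nat.log 10 j = m := Nat.log_eq_of_pow_le_of_lt_pow
      ((Nat.le_mul_of_pos_left _ (Nat.pos_of_ne_zero hd0)).trans hlo)
      (hhi.trans_le (by rw [pow_succ']; gcongr; omega))
    exact ⟨by rw [leadingDigit, hlog, Nat.div_eq_of_lt_le hlo hhi], hlog⟩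

theorem ldCount_eq_sum_card_inter {d i : ℕ} (hd0 : d ≠ 0) (hd : d < 10) :
    ldCount d i = ∑ m ∈ range (Nat.log 10 i + 1),
      #(Icc 1 i ∩ Ico (d * 10 ^ m) ((d + 1) * 10 ^ m)) := by
  have hmaps : ((({j ∈ Icc 1 i | leadingDigit j = d}) : Finset ℕ) : Set ℕ).MapsTo
      (Nat.log 10) (range (Nat.log 10 i + 1)) := fun j hj => by
    simp only [coe_filter, mem_Icc, Set.mem_ofPred_eq] at hj
    exact mem_range_succ_iff.2 (Nat.log_mono_right hj.1.2)
  rw [ldCount, card_eq_sum_card_fiberwise hmaps]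
  refine sum_congr rfl fun m _ => ?_
  simp only [filter_filter, leadingDigit_eq_and_log_eq_iff hd0 hd, filter_mem_eq_inter]

theorem isLeast_lt_mul_pow {d i L : ℕ} (hd0 : d ≠ 0) (hle : d * 10 ^ L ≤ i)
    (hlt : i < 10 ^ (L + 1)) : IsLeast {m : ℕ | d * 10 ^ m > i} (L + 1) := by
  refine ⟨lt_of_lt_of_le hlt (Nat.le_mul_of_pos_left _ (Nat.pos_of_ne_zero hd0)), fun m hm => ?_⟩
  by_contra! hmL
  have : d * 10 ^ m ≤ d * 10 ^ L := by gcongr <;> omega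
  simp only [Set.mem_ofPred_eq] at hm
  omega

theorem card_Icc_one_inter_Ico_of_lt_log {d i m : ℕ} (hd0 : d ≠ 0) (hd : d < 10)
    (hm : m < Nat.log 10 i) : #(Icc 1 i ∩ Ico (d * 10 ^ m) ((d + 1) * 10 ^ m)) = 10 ^ m := by
  have hblock : (d + 1) * 10 ^ m ≤ i := calc
    (d + 1) * 10 ^ m ≤ 10 ^ (m + 1) := by rw [pow_succ']; gcongr; omega
    _ ≤ 10 ^ Nat.log 10 i := Nat.pow_le_pow_right (by norm_num) hm
    _ ≤ i := Nat.pow_log_le_self 10 (by rintro rfl; simp at hm)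
  have hpos : 0 < d * 10 ^ m := by positivity
  rw [inter_eq_right.2 fun j hj => by simp only [mem_Icc, mem_Ico] at hj ⊢; omega,
    Nat.card_Ico, add_mul]
  omega

theorem ldCount_of_leading_eq (d i k : ℕ) (hd : d ∈ Finset.Icc 1 9)
    (hlead : leadingDigit i = d)
    (hk : IsLeast {m : ℕ | d * 10 ^ m > i} k) :
    ldCount d i = (10 ^ (k - 1) - 1) / 9 + i - d * 10 ^ (k - 1) + 1 := by
  obtain ⟨hd1, hd9⟩ := mem_Icc.1 hd
  have hd0 : d ≠ 0 := by omega
  have hd10 : d < 10 := by omega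
  set L := Nat.log 10 i
  obtain ⟨hlo, hhi⟩ : d * 10 ^ L ≤ i ∧ i < (d + 1) * 10 ^ L :=
    mem_Ico.1 ((leadingDigit_eq_and_log_eq_iff hd0 hd10).1 ⟨hlead, rfl⟩)
  obtain rfl : k = L + 1 :=
    hk.unique (isLeast_lt_mul_pow hd0 hlo (Nat.lt_pow_succ_log_self (by norm_num) i))
  have hfull : ∀ m ∈ range L, #(Icc 1 i ∩ Ico (d * 10 ^ m) ((d + 1) * 10 ^ m)) = 10 ^ m :=
    fun m hm => card_Icc_one_inter_Ico_of_lt_log hd0 hd10 (mem_range.1 hm)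
  have hlast : Icc 1 i ∩ Ico (d * 10 ^ L) ((d + 1) * 10 ^ L) = Icc (d * 10 ^ L) i := by
    have hpos : 0 < d * 10 ^ L := by positivity
    ext j; simp only [mem_inter, mem_Icc, mem_Ico]; omega
  rw [ldCount_eq_sum_card_inter hd0 hd10, sum_range_succ, sum_congr rfl hfull, hlast,
    Nat.card_Icc, Nat.geomSum_eq (by norm_num : 2 ≤ 10), Nat.add_sub_cancel]
  omega
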